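/- arXiv:1810.02943 — 2 statements merged into one kernel-verified Lean document; each statement's English description precedes it below -/
import Mathlib

section
/- For integers n ≥ 1 and 0 ≤ t ≤ n, the maximum over s ∈ {0, 1, ..., t} of the quantity s(2n − s + 1)/2 + (t − s)(2n − t + s + 1)/2 equals nt − (t² − t)/2 + ⌊t²/4⌋. -/
/-! The summand equals `n t - (t² - t)/2 + s (t - s)`, and over the integers `s (t - s)` is at most
`⌊t²/4⌋` (as `4 s (t - s) = t² - (t - 2s)²`), with equality at `s = ⌊t/2⌋`. -/

open Finset

theorem Int.ediv_two_mul_sub_ediv_two (t : ℤ) : t / 2 * (t - t / 2) = t ^ 2 / 4 := by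
  rcases Int.even_or_odd' t with ⟨k, rfl | rfl⟩
  · rw [show (2 * k) ^ 2 = 4 * (k * k) by ring, show 2 * k / 2 = k by omega,
      Int.mul_ediv_cancel_left _ (by norm_num)]
    ring
  · rw [show (2 * k + 1) ^ 2 = 1 + 4 * (k * (k + 1)) by ring, show (2 * k + 1) / 2 = k by omega,
      Int.add_mul_ediv_left _ _ (by norm_num), show (1 : ℤ) / 4 = 0 by norm_num]
    ring

theorem Int.mul_sub_le_sq_ediv_four (s t : ℤ) : s * (t - s) ≤ t ^ 2 / 4 :=
  (Int.le_ediv_iff_mul_le (by norm_num)).2 (by nlinarith [sq_nonneg (t - 2 * s)])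

theorem Int.sup'_Icc_mul_sub (t : ℤ) (ht : 0 ≤ t) :
    (Icc 0 t).sup' (nonempty_Icc.mpr ht) (fun s => s * (t - s)) = t ^ 2 / 4 :=
  le_antisymm (sup'_le _ _ fun s _ => Int.mul_sub_le_sq_ediv_four s t)
    (le_sup'_of_le _ (mem_Icc.mpr ⟨by omega, by omega⟩) (Int.ediv_two_mul_sub_ediv_two t).ge)

theorem stmt_1_general (n t : ℤ) (ht0 : 0 ≤ t) :
    (Finset.Icc (0 : ℤ) t).sup' (Finset.nonempty_Icc.mpr ht0)
      (fun s : ℤ => ((s : ℚ) * (2 * (n : ℚ) - s + 1)) / 2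
        + (((t : ℚ) - s) * (2 * (n : ℚ) - t + s + 1)) / 2)
    = (n : ℚ) * t - ((t : ℚ) ^ 2 - t) / 2 + ((t ^ 2 / 4 : ℤ) : ℚ) := by
  let shift : ℤ → ℚ := fun x => n * t - ((t : ℚ) ^ 2 - t) / 2 + x
  have hshift : Monotone shift := fun x y hxy => by simpa [shift] using hxy
  rw [← Int.sup'_Icc_mul_sub t ht0]
  refine .trans ?_ (apply_sup'_eq_sup'_comp _ shift hshift.map_sup).symm
  refine sup'_congr _ rfl fun s _ => ?_
  simp only [Function.comp_apply, shift]
  push_cast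
  ring

/-- For integers `n ≥ 1` and `0 ≤ t ≤ n`, the maximum over `s ∈ {0,…,t}` of
`s(2n−s+1)/2 + (t−s)(2n−t+s+1)/2` equals `nt − (t²−t)/2 + ⌊t²/4⌋`. -/
theorem stmt_1 (n t : ℤ) (hn : 1 ≤ n) (ht0 : 0 ≤ t) (htn : t ≤ n) :
    (Finset.Icc (0 : ℤ) t).sup' (Finset.nonempty_Icc.mpr ht0)
      (fun s : ℤ => ((s : ℚ) * (2 * (n : ℚ) - s + 1)) / 2
        + (((t : ℚ) - s) * (2 * (n : ℚ) - t + s + 1)) / 2)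
    = (n : ℚ) * t - ((t : ℚ) ^ 2 - t) / 2 + ((t ^ 2 / 4 : ℤ) : ℚ) :=
  stmt_1_general n t ht0
end

section
/- Let n ≥ 1 and 0 ≤ t ≤ n be integers, and let u, v be permutations of {0, 1, ..., n}. Then the sum over l from 0 to t−1 of max{u(l), v(l)} is at most nt − (t² − t)/2 + ⌊t²/4⌋. -/
/-!
Count by layers: the sum of `max (u l) (v l)` over a set `S` of `t` indices is the sum over
`m ≤ n` of the number of `l ∈ S` with `max (u l) (v l) > m`. Since `u` and `v` are injective
with values at most `n`, each of them exceeds `m` at most `n - m` times, so that number is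
at most `min t (2 (n - m))`. Summing these caps gives `⌊t/2⌋(⌊t/2⌋ + 1) + (n - ⌊t/2⌋) t`,
which is `nt - (t² - t)/2 + ⌊t²/4⌋`.
-/

open Finset

def maxSumBound (n t : ℕ) : ℕ := t / 2 * (t / 2 + 1) + (n - t / 2) * t

theorem sum_range_min_two_mul_eq_maxSumBound {t n : ℕ} (h : t / 2 ≤ n) :
    ∑ j ∈ range (n + 1), min t (2 * j) = maxSumBound n t := by
  rw [maxSumBound, ← sum_range_add_sum_Ico _ (by omega : t / 2 + 1 ≤ n + 1)]
  have hlow : ∀ j ∈ range (t / 2 + 1), min t (2 * j) = 2 * j := fun j hj => by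
    simp only [mem_range] at hj; omega
  have hhigh : ∀ j ∈ Ico (t / 2 + 1) (n + 1), min t (2 * j) = t := fun j hj => by
    simp only [mem_Ico] at hj; omega
  rw [sum_congr rfl hlow, sum_congr rfl hhigh, ← mul_sum, mul_comm, sum_range_id_mul_two,
    sum_const, Nat.card_Ico, smul_eq_mul, Nat.add_sub_cancel, mul_comm (t / 2 + 1),
    Nat.add_sub_add_right]

namespace Finset

variable {α : Type*}

theorem sum_eq_sum_range_card_filter_lt (S : Finset α) (f : α → ℕ) {N : ℕ}
    (hf : ∀ l ∈ S, f l ≤ N) :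
    ∑ l ∈ S, f l = ∑ m ∈ range N, #{l ∈ S | m < f l} := by
  have hcount : ∀ l ∈ S, f l = ∑ m ∈ range N, if m < f l then 1 else 0 := by
    intro l hl
    have hfl : {m ∈ range N | m < f l} = range (f l) := by
      ext m
      simp only [mem_filter, mem_range]
      have := hf l hl
      omega
    rw [sum_boole, Nat.cast_id, hfl, card_range]
  rw [sum_congr rfl hcount, sum_comm]
  simp only [sum_boole, Nat.cast_id]

theorem card_filter_lt_le_of_injOn (S : Finset α) {f : α → ℕ} {n : ℕ} (hf : Set.InjOn f S)
    (hfn : ∀ l ∈ S, f l ≤ n) (m : ℕ) : #{l ∈ S | m < f l} ≤ n - m := by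
  rw [← Nat.card_Ioc]
  refine card_le_card_of_injOn f (fun l hl => ?_) (hf.mono (coe_subset.2 (filter_subset _ _)))
  simp only [mem_coe, mem_filter, mem_Ioc] at hl ⊢
  exact ⟨hl.2, hfn l hl.1⟩

theorem card_filter_lt_max_le [DecidableEq α] (S : Finset α) {u v : α → ℕ} {n : ℕ}
    (hu : Set.InjOn u S) (hv : Set.InjOn v S) (hun : ∀ l ∈ S, u l ≤ n)
    (hvn : ∀ l ∈ S, v l ≤ n) (m : ℕ) :
    #{l ∈ S | m < max (u l) (v l)} ≤ min #S (2 * (n - m)) := by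
  refine le_min (card_filter_le _ _) ?_
  rw [filter_congr fun l _ => lt_max_iff, filter_or]
  calc #({l ∈ S | m < u l} ∪ {l ∈ S | m < v l})
      ≤ #{l ∈ S | m < u l} + #{l ∈ S | m < v l} := card_union_le _ _
    _ ≤ (n - m) + (n - m) :=
        add_le_add (card_filter_lt_le_of_injOn S hu hun m) (card_filter_lt_le_of_injOn S hv hvn m)
    _ = 2 * (n - m) := (two_mul _).symm

theorem sum_max_le_maxSumBound [DecidableEq α] (S : Finset α) {u v : α → ℕ} {n : ℕ}
    (hu : Set.InjOn u S) (hv : Set.InjOn v S) (hun : ∀ l ∈ S, u l ≤ n)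
    (hvn : ∀ l ∈ S, v l ≤ n) :
    ∑ l ∈ S, max (u l) (v l) ≤ maxSumBound n #S := by
  have hS : #S ≤ n + 1 := by
    simpa using card_le_card_of_injOn u (t := range (n + 1))
      (fun l hl => mem_range.2 (Nat.lt_succ_of_le (hun l hl))) hu
  calc ∑ l ∈ S, max (u l) (v l)
      = ∑ m ∈ range (n + 1), #{l ∈ S | m < max (u l) (v l)} :=
        sum_eq_sum_range_card_filter_lt S _ fun l hl =>
          (max_le (hun l hl) (hvn l hl)).trans n.le_succ
    _ ≤ ∑ m ∈ range (n + 1), min #S (2 * (n - m)) :=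
        sum_le_sum fun m _ => card_filter_lt_max_le S hu hv hun hvn m
    _ = ∑ j ∈ range (n + 1), min #S (2 * j) := by
        rw [← sum_range_reflect]
        refine sum_congr rfl fun m hm => ?_
        rw [mem_range] at hm
        congr 2
        omega
    _ = maxSumBound n #S := sum_range_min_two_mul_eq_maxSumBound (by omega)

end Finset

theorem cast_maxSumBound_eq {n t : ℕ} (h : t / 2 ≤ n) :
    (maxSumBound n t : ℚ) = n * t - ((t : ℚ) ^ 2 - t) / 2 + ((t ^ 2 / 4 : ℕ) : ℚ) := by
  unfold maxSumBound
  obtain ⟨k, rfl | rfl⟩ := Nat.even_or_odd' t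
  · have hsq : (2 * k) ^ 2 / 4 = k * k := by
      rw [show (2 * k) ^ 2 = 4 * (k * k) by ring, Nat.mul_div_cancel_left _ four_pos]
    rw [show 2 * k / 2 = k by omega] at h ⊢
    rw [hsq]
    push_cast [h]
    ring
  · have hsq : (2 * k + 1) ^ 2 / 4 = k * k + k := by
      rw [show (2 * k + 1) ^ 2 = 4 * (k * k + k) + 1 by ring]
      omega
    rw [show (2 * k + 1) / 2 = k by omega] at h ⊢
    rw [hsq]
    push_cast [h]
    ring

theorem stmt_2_general (n t : ℕ) (htn : t ≤ n)
    (u v : Equiv.Perm (Fin (n + 1))) :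
    ((∑ l ∈ Finset.univ.filter (fun l : Fin (n + 1) => (l : ℕ) < t),
        max ((u l : ℕ)) ((v l : ℕ)) : ℕ) : ℚ)
      ≤ (n : ℚ) * t - ((t : ℚ) ^ 2 - t) / 2 + ((t ^ 2 / 4 : ℕ) : ℚ) := by
  have hcard : #{l : Fin (n + 1) | (l : ℕ) < t} = t := by
    rw [Fin.card_filter_val_lt]
    omega
  have hval_inj (w : Equiv.Perm (Fin (n + 1))) : Function.Injective fun l => (w l : ℕ) :=
    Fin.val_injective.comp w.injective
  have hval_le (w : Equiv.Perm (Fin (n + 1))) (l : Fin (n + 1)) : (w l : ℕ) ≤ n :=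
    Nat.lt_succ_iff.mp (w l).isLt
  have hbound := sum_max_le_maxSumBound {l : Fin (n + 1) | (l : ℕ) < t}
    (hval_inj u).injOn (hval_inj v).injOn (fun l _ => hval_le u l) (fun l _ => hval_le v l)
  rw [hcard] at hbound
  rw [← cast_maxSumBound_eq (by omega)]
  exact_mod_cast hbound

/-- For integers `n ≥ 1`, `0 ≤ t ≤ n` and permutations `u, v` of `{0,…,n}`,
`∑_{l=0}^{t-1} max (u l) (v l) ≤ nt − (t²−t)/2 + ⌊t²/4⌋`. -/
theorem stmt_2 (n t : ℕ) (hn : 1 ≤ n) (htn : t ≤ n)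
    (u v : Equiv.Perm (Fin (n + 1))) :
    ((∑ l ∈ Finset.univ.filter (fun l : Fin (n + 1) => (l : ℕ) < t),
        max ((u l : ℕ)) ((v l : ℕ)) : ℕ) : ℚ)
      ≤ (n : ℚ) * t - ((t : ℚ) ^ 2 - t) / 2 + ((t ^ 2 / 4 : ℕ) : ℚ) :=
  stmt_2_general n t htn u v
end
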